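/- (Appendix, equation (12b).) For all subcarriers p, q ∈ {0,…,N−1} with p ≠ q, E[ conj(h̄(p)) · H̄^{ICI}_{pq} ] = (1 − ρ̄(q−p)) / ( N·(1 − e^{2πi(q−p)/N}) ), where ρ̄(η) = Σ_{ℓ=0}^{L−1} ρ(ℓ)·e^{−2πiℓη/N} for integers η. -/

import Mathlib

/-!
With `ζ = e^{2πi/N}` and `w = ζ^(q-p)`, the taps being uncorrelated reduces
`E[conj(h̄(p)) · H̄^{ICI}_{pq}]` to `∑_ℓ ρ(ℓ)/N · ∑_{n=ℓ}^{N-1} w^(n-ℓ)`.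
Since `0 < |q - p| < N`, `w` is an `N`-th root of unity other than `1`, so each geometric sum
equals `(w^(-ℓ) - 1)/(w - 1)`; summing against `ρ` gives `(ρ̄(q-p) - 1)/(N(w - 1))`.
-/

open Finset MeasureTheory

/-- Frequency-domain channel coefficient `h̄(p) = ∑_{ℓ=0}^{L-1} h(ℓ)·e^{-2πiℓp/N}`. -/
noncomputable def hBar {Ω : Type*} (N L : ℕ) (h : ℕ → Ω → ℂ) (p : ℕ) (ω : Ω) : ℂ :=
  ∑ ℓ ∈ range L, h ℓ ω *
    Complex.exp (-(2 * (Real.pi : ℂ) * Complex.I * (ℓ : ℂ) * (p : ℂ)) / (N : ℂ))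

/-- Frequency-domain ICI matrix entry
`H̄^{ICI}_{pq} = (1/N)·∑_{n=0}^{N-1} ∑_{ℓ=0}^{L-1} h(ℓ)·e^{2πi(nq-ℓq-np)/N}·𝟙[ℓ ≤ n]`. -/
noncomputable def Hici {Ω : Type*} (N L : ℕ) (h : ℕ → Ω → ℂ) (p q : ℕ) (ω : Ω) : ℂ :=
  (1 / (N : ℂ)) * ∑ n ∈ range N, ∑ ℓ ∈ range L,
    h ℓ ω * Complex.exp (2 * (Real.pi : ℂ) * Complex.I *
      ((((n * q : ℕ) : ℤ) - ((ℓ * q : ℕ) : ℤ) - ((n * p : ℕ) : ℤ) : ℤ) : ℂ) / (N : ℂ)) *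
    (if ℓ ≤ n then 1 else 0)

/-- DFT of the power delay profile: `ρ̄(η) = ∑_{ℓ=0}^{L-1} ρ(ℓ)·e^{-2πiℓη/N}`. -/
noncomputable def rhoBar (N L : ℕ) (ρ : ℕ → ℝ) (η : ℤ) : ℂ :=
  ∑ ℓ ∈ range L, (ρ ℓ : ℂ) *
    Complex.exp (-(2 * (Real.pi : ℂ) * Complex.I * (ℓ : ℂ) * (η : ℂ)) / (N : ℂ))

open Complex
open scoped Real ComplexConjugate

lemma IsPrimitiveRoot.zpow_ne_one_of_abs_lt {K : Type*} [CommGroupWithZero K] {ζ : K} {N : ℕ}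
    (hζ : IsPrimitiveRoot ζ N) {d : ℤ} (hd0 : d ≠ 0) (hdN : |d| < N) : ζ ^ d ≠ 1 := by
  rw [Ne, hζ.zpow_eq_one_iff_dvd]
  exact fun hdvd => hd0 (Int.eq_zero_of_abs_lt_dvd hdvd hdN)

lemma sum_Ico_zpow_sub_of_pow_eq_one {K : Type*} [Field K] {w : K} {N ℓ : ℕ} (hw : w ≠ 1)
    (hwN : w ^ N = 1) (hℓ : ℓ ≤ N) :
    ∑ n ∈ Ico ℓ N, w ^ ((n : ℤ) - ℓ) = (w ^ (-(ℓ : ℤ)) - 1) / (w - 1) := by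
  rcases eq_or_ne w 0 with rfl | hw0
  · obtain rfl : N = 0 := by simpa [zero_pow_eq] using hwN
    obtain rfl : ℓ = 0 := by omega
    simp
  simp_rw [zpow_sub₀ hw0, zpow_natCast, div_eq_mul_inv, ← sum_mul, ← div_eq_mul_inv,
    geom_sum_Ico hw hℓ, hwN, zpow_neg, zpow_natCast]
  field_simp

lemma integral_conj_sum_mul_sum {Ω ι : Type*} [MeasurableSpace Ω] {μ : Measure Ω} [DecidableEq ι]
    {s : Finset ι} {X : ι → Ω → ℂ} {σ : ι → ℂ}
    (hint : ∀ i ∈ s, ∀ j ∈ s, Integrable (fun ω => X i ω * conj (X j ω)) μ)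
    (hcov : ∀ i ∈ s, ∀ j ∈ s, ∫ ω, X i ω * conj (X j ω) ∂μ = if i = j then σ i else 0)
    (a b : ι → ℂ) :
    ∫ ω, conj (∑ i ∈ s, X i ω * a i) * ∑ j ∈ s, X j ω * b j ∂μ
      = ∑ i ∈ s, σ i * (conj (a i) * b i) := by
  have hexpand : ∀ ω, conj (∑ i ∈ s, X i ω * a i) * ∑ j ∈ s, X j ω * b j
      = ∑ j ∈ s, ∑ i ∈ s, X j ω * conj (X i ω) * (conj (a i) * b j) := by
    intro ω
    simp only [map_sum, map_mul, sum_mul, mul_sum]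
    exact sum_congr rfl fun j _ => sum_congr rfl fun i _ => by ring
  simp_rw [hexpand]
  rw [integral_finsetSum _ fun j hj => integrable_finsetSum _ fun i hi =>
    (hint j hj i hi).mul_const _]
  refine sum_congr rfl fun j hj => ?_
  rw [integral_finsetSum _ fun i hi => (hint j hj i hi).mul_const _]
  simp_rw [integral_mul_const]
  rw [sum_congr rfl fun i hi => by rw [hcov j hj i hi], sum_eq_single_of_mem j hj
    fun i _ hij => by rw [if_neg hij.symm, zero_mul], if_pos rfl]

section
variable (N : ℕ)

local notation "ζ" => exp (2 * π * I / N)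

lemma exp_two_pi_I_int_mul_div (k : ℤ) : exp (2 * π * I * k / N) = ζ ^ k := by
  rw [← exp_int_mul]; ring_nf

lemma conj_exp_two_pi_I_div : conj ζ = ζ⁻¹ := by
  rw [← exp_conj, ← exp_neg]
  simp only [map_div₀, map_mul, map_ofNat, conj_ofReal, conj_I, map_natCast]
  ring_nf

lemma hBar_eq_sum_zpow {Ω : Type*} (L : ℕ) (h : ℕ → Ω → ℂ) (p : ℕ) (ω : Ω) :
    hBar N L h p ω = ∑ ℓ ∈ range L, h ℓ ω * ζ ^ (-((ℓ * p : ℕ) : ℤ)) := by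
  refine sum_congr rfl fun ℓ _ => ?_
  rw [← exp_two_pi_I_int_mul_div]
  push_cast
  ring_nf

lemma rhoBar_eq_sum_zpow (L : ℕ) (ρ : ℕ → ℝ) (η : ℤ) :
    rhoBar N L ρ η = ∑ ℓ ∈ range L, (ρ ℓ : ℂ) * (ζ ^ η) ^ (-(ℓ : ℤ)) := by
  refine sum_congr rfl fun ℓ _ => ?_
  rw [← zpow_mul, ← exp_two_pi_I_int_mul_div]
  push_cast
  ring_nf

lemma Hici_eq_sum_zpow {Ω : Type*} (L : ℕ) (h : ℕ → Ω → ℂ) (p q : ℕ) (ω : Ω) :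
    Hici N L h p q ω = ∑ ℓ ∈ range L, h ℓ ω *
      (1 / N * ∑ n ∈ Ico ℓ N, ζ ^ (((n * q : ℕ) : ℤ) - ((ℓ * q : ℕ) : ℤ) - ((n * p : ℕ) : ℤ))) := by
  have hIco : ∀ ℓ, (range N).filter (ℓ ≤ ·) = Ico ℓ N := fun ℓ => by ext; simp [and_comm]
  rw [Hici, sum_comm, mul_sum]
  refine sum_congr rfl fun ℓ _ => ?_
  simp_rw [mul_ite, mul_one, mul_zero]
  rw [← sum_filter, hIco, mul_sum, mul_sum, mul_sum]
  exact sum_congr rfl fun n _ => by rw [exp_two_pi_I_int_mul_div]; ring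

lemma conj_zpow_mul_sum_zpow (ℓ p q : ℕ) (s : Finset ℕ) :
    conj (ζ ^ (-((ℓ * p : ℕ) : ℤ))) *
        ∑ n ∈ s, ζ ^ (((n * q : ℕ) : ℤ) - ((ℓ * q : ℕ) : ℤ) - ((n * p : ℕ) : ℤ))
      = ∑ n ∈ s, (ζ ^ ((q : ℤ) - p)) ^ ((n : ℤ) - ℓ) := by
  rw [map_zpow₀, conj_exp_two_pi_I_div, inv_zpow', neg_neg, mul_sum]
  refine sum_congr rfl fun n _ => ?_
  rw [← zpow_add₀ (exp_ne_zero _), ← zpow_mul]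
  push_cast
  ring_nf
end

theorem stmt2_general {Ω : Type*} [MeasurableSpace Ω] (μ : Measure Ω)
    (N L : ℕ) (hLN : L ≤ N)
    (ρ : ℕ → ℝ) (hsum : ∑ ℓ ∈ range L, ρ ℓ = 1)
    (h : ℕ → Ω → ℂ)
    (hint : ∀ ℓ ℓ', ℓ < L → ℓ' < L →
      Integrable (fun ω => h ℓ ω * (starRingEnd ℂ) (h ℓ' ω)) μ)
    (hcov : ∀ ℓ ℓ', ℓ < L → ℓ' < L →
      ∫ ω, h ℓ ω * (starRingEnd ℂ) (h ℓ' ω) ∂μ = if ℓ = ℓ' then ((ρ ℓ : ℝ) : ℂ) else 0)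
    (p q : ℕ) (hp : p < N) (hq : q < N) (hpq : p ≠ q) :
    ∫ ω, (starRingEnd ℂ) (hBar N L h p ω) * Hici N L h p q ω ∂μ
      = (1 - rhoBar N L ρ ((q : ℤ) - (p : ℤ))) /
        ((N : ℂ) * (1 - Complex.exp (2 * (Real.pi : ℂ) * Complex.I *
          (((q : ℤ) - (p : ℤ) : ℤ) : ℂ) / (N : ℂ)))) := by
  have hζ : IsPrimitiveRoot (exp (2 * π * I / N)) N := isPrimitiveRoot_exp N (by omega)
  simp_rw [hBar_eq_sum_zpow, Hici_eq_sum_zpow]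
  rw [integral_conj_sum_mul_sum (fun i hi j hj => hint i j (mem_range.1 hi) (mem_range.1 hj))
    (fun i hi j hj => hcov i j (mem_range.1 hi) (mem_range.1 hj)),
    exp_two_pi_I_int_mul_div, rhoBar_eq_sum_zpow]
  set w := exp (2 * π * I / N) ^ ((q : ℤ) - p)
  have hw : w ≠ 1 := hζ.zpow_ne_one_of_abs_lt (by omega) (by rw [abs_lt]; omega)
  have hwN : w ^ N = 1 := by
    rw [← zpow_natCast, ← zpow_mul, mul_comm ((q : ℤ) - p), zpow_mul, zpow_natCast,
      hζ.pow_eq_one, one_zpow]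
  calc _ = ∑ ℓ ∈ range L, (ρ ℓ : ℂ) * (1 / N * ((w ^ (-(ℓ : ℤ)) - 1) / (w - 1))) := by
        refine sum_congr rfl fun ℓ hℓ => ?_
        rw [mul_left_comm (conj _) (1 / (N : ℂ)), conj_zpow_mul_sum_zpow,
          sum_Ico_zpow_sub_of_pow_eq_one hw hwN (by have := mem_range.1 hℓ; omega)]
    _ = (∑ ℓ ∈ range L, (ρ ℓ : ℂ) * w ^ (-(ℓ : ℤ)) - ∑ ℓ ∈ range L, (ρ ℓ : ℂ)) / N
          / (w - 1) := by
        rw [← sum_sub_distrib, sum_div, sum_div]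
        exact sum_congr rfl fun ℓ _ => by ring
    _ = _ := by
        have hw' : (1 : ℂ) - w ≠ 0 := sub_ne_zero.2 (Ne.symm hw)
        rw [← ofReal_sum, hsum, ofReal_one]
        field_simp
        ring

/-- Appendix, equation (12b): for `p ≠ q`,
`E[conj(h̄(p)) · H̄^{ICI}_{pq}] = (1 - ρ̄(q-p)) / (N·(1 - e^{2πi(q-p)/N}))`. -/
theorem stmt2 {Ω : Type*} [MeasurableSpace Ω] (μ : Measure Ω) [IsProbabilityMeasure μ]
    (N L : ℕ) (hL1 : 1 ≤ L) (hLN : L ≤ N)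
    (ρ : ℕ → ℝ) (hnn : ∀ ℓ, 0 ≤ ρ ℓ) (hsum : ∑ ℓ ∈ range L, ρ ℓ = 1)
    (h : ℕ → Ω → ℂ)
    (hint : ∀ ℓ ℓ', ℓ < L → ℓ' < L →
      Integrable (fun ω => h ℓ ω * (starRingEnd ℂ) (h ℓ' ω)) μ)
    (hmean : ∀ ℓ, ℓ < L → ∫ ω, h ℓ ω ∂μ = 0)
    (hcov : ∀ ℓ ℓ', ℓ < L → ℓ' < L →
      ∫ ω, h ℓ ω * (starRingEnd ℂ) (h ℓ' ω) ∂μ = if ℓ = ℓ' then ((ρ ℓ : ℝ) : ℂ) else 0)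
    (p q : ℕ) (hp : p < N) (hq : q < N) (hpq : p ≠ q) :
    ∫ ω, (starRingEnd ℂ) (hBar N L h p ω) * Hici N L h p q ω ∂μ
      = (1 - rhoBar N L ρ ((q : ℤ) - (p : ℤ))) /
        ((N : ℂ) * (1 - Complex.exp (2 * (Real.pi : ℂ) * Complex.I *
          (((q : ℤ) - (p : ℤ) : ℤ) : ℂ) / (N : ℂ)))) :=
  stmt2_general μ N L hLN ρ hsum h hint hcov p q hp hq hpq
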